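/- arXiv:2203.03020 — 8 statements merged into one kernel-verified Lean document; each statement's English description precedes it below -/
import Mathlib

section
/- Let (Ω, P) be a probability space with random variables Y¹, Y⁰ : Ω → ℝ (potential outcomes), A : Ω → {0,1} (natural treatment), and L : Ω → 𝓛 (covariates). Define the optimal regime g_opt(l) = argmax_{a∈{0,1}} E[Yᵃ | L=l] and the superoptimal regime g_sup(a',l) = argmax_{a∈{0,1}} E[Yᵃ | A=a', L=l]. Then for every l with P(L=l)>0, E[Y^{g_opt(l)} | L=l] ≤ E[Y^{g_sup(A,l)} | L=l], where Y^{g_sup(A,l)} denotes the random variable ω ↦ Y^{g_sup(A(ω),l)}(ω). -/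
open scoped Classical
open Finset

noncomputable def pr {Ω : Type*} [Fintype Ω] (p : Ω → ℝ) (E : Ω → Prop) : ℝ :=
  ∑ ω, if E ω then p ω else 0

noncomputable def cex {Ω : Type*} [Fintype Ω] (p : Ω → ℝ) (f : Ω → ℝ) (E : Ω → Prop) : ℝ :=
  (∑ ω, if E ω then p ω * f ω else 0) / pr p E

noncomputable def ex {Ω : Type*} [Fintype Ω] (p : Ω → ℝ) (f : Ω → ℝ) : ℝ :=
  ∑ ω, p ω * f ω

noncomputable def cpr {Ω : Type*} [Fintype Ω] (p : Ω → ℝ) (E F : Ω → Prop) : ℝ :=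
  pr p (fun ω => E ω ∧ F ω) / pr p F

/-!
Split the event `L = l` into the cells `A = a', L = l`. On each cell the superoptimal
regime is a constant treatment `gsup a' l`, which by definition does at least as well as
any other constant treatment, in particular `gopt l`. Adding up the unnormalised
conditional expectations over the cells gives the claim; cells of probability zero
contribute nothing to either side.
-/

section

variable {Ω : Type*} [Fintype Ω] {p : Ω → ℝ}

lemma pr_nonneg (hp : ∀ ω, 0 ≤ p ω) (E : Ω → Prop) : 0 ≤ pr p E :=
  sum_nonneg fun ω _ => by split_ifs <;> simp [hp ω]

lemma eq_zero_of_pr_eq_zero (hp : ∀ ω, 0 ≤ p ω) {E : Ω → Prop} (hE : pr p E = 0) {ω : Ω}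
    (hω : E ω) : p ω = 0 := by
  have hterm := (sum_eq_zero_iff_of_nonneg fun ω _ => by split_ifs <;> simp [hp ω]).mp hE ω
    (mem_univ ω)
  simpa [hω] using hterm

lemma cex_congr {f g : Ω → ℝ} {E : Ω → Prop} (hfg : ∀ ω, E ω → f ω = g ω) :
    cex p f E = cex p g E := by
  unfold cex
  congr 1
  refine sum_congr rfl fun ω _ => ?_
  split_ifs with hω
  · rw [hfg ω hω]
  · rfl

lemma sum_ite_eq_sum_cells {β : Type*} [Fintype β] (B : Ω → β) (E : Ω → Prop) (h : Ω → ℝ) :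
    (∑ ω, if E ω then h ω else 0) = ∑ b, ∑ ω, if B ω = b ∧ E ω then h ω else 0 := by
  rw [sum_comm]
  refine sum_congr rfl fun ω _ => ?_
  by_cases hω : E ω <;> simp [hω]

lemma weighted_sum_le_of_cex_le (hp : ∀ ω, 0 ≤ p ω) {f g : Ω → ℝ} {E : Ω → Prop}
    (h : pr p E > 0 → cex p f E ≤ cex p g E) :
    (∑ ω, if E ω then p ω * f ω else 0) ≤ ∑ ω, if E ω then p ω * g ω else 0 := by
  rcases (pr_nonneg hp E).lt_or_eq with hpos | hzero
  · exact (div_le_div_iff_of_pos_right hpos).mp (h hpos)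
  · have hvanish : ∀ k : Ω → ℝ, (∑ ω, if E ω then p ω * k ω else 0) = 0 := fun k =>
      sum_eq_zero fun ω _ => by
        split_ifs with hω
        · simp [eq_zero_of_pr_eq_zero hp hzero.symm hω]
        · rfl
    rw [hvanish f, hvanish g]

lemma cex_le_cex_of_cells {β : Type*} [Fintype β] (hp : ∀ ω, 0 ≤ p ω) (B : Ω → β)
    {f g : Ω → ℝ} {E : Ω → Prop}
    (hcell : ∀ b, pr p (fun ω => B ω = b ∧ E ω) > 0 →
      cex p f (fun ω => B ω = b ∧ E ω) ≤ cex p g (fun ω => B ω = b ∧ E ω)) :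
    cex p f E ≤ cex p g E := by
  unfold cex
  refine div_le_div_of_nonneg_right ?_ (pr_nonneg hp E)
  rw [sum_ite_eq_sum_cells B, sum_ite_eq_sum_cells B]
  refine sum_le_sum fun b _ => ?_
  -- the two sides decide `B ω = b ∧ E ω` through different `Decidable` instances
  convert weighted_sum_le_of_cex_le hp (hcell b) using 4
  rfl

end

theorem stmt0_general
    {Ω 𝓛 : Type*} [Fintype Ω]
    (p : Ω → ℝ) (hp : ∀ ω, 0 ≤ p ω)
    (Y : Bool → Ω → ℝ) (A : Ω → Bool) (L : Ω → 𝓛)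
    (gopt : 𝓛 → Bool) (gsup : Bool → 𝓛 → Bool)
    -- `gsup a' l` maximizes `a ↦ E[Yᵃ | A = a', L = l]`
    (hsup : ∀ a' l, pr p (fun ω => A ω = a' ∧ L ω = l) > 0 →
      ∀ a, cex p (Y a) (fun ω => A ω = a' ∧ L ω = l) ≤
        cex p (Y (gsup a' l)) (fun ω => A ω = a' ∧ L ω = l)) :
    ∀ l, pr p (fun ω => L ω = l) > 0 →
      cex p (fun ω => Y (gopt l) ω) (fun ω => L ω = l) ≤
      cex p (fun ω => Y (gsup (A ω) l) ω) (fun ω => L ω = l) := by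
  intro l _
  refine cex_le_cex_of_cells hp A fun a' hpos => ?_
  have hregime : cex p (fun ω => Y (gsup (A ω) l) ω) (fun ω => A ω = a' ∧ L ω = l) =
      cex p (Y (gsup a' l)) (fun ω => A ω = a' ∧ L ω = l) :=
    cex_congr fun ω hω => by rw [hω.1]
  rw [hregime]
  exact hsup a' l hpos (gopt l)

/-- Superoptimality: the `L`-superoptimal regime is at least as good as the
`L`-optimal regime, conditionally on every value of `L` with positive probability. -/
theorem stmt0
    {Ω 𝓛 : Type*} [Fintype Ω] [Fintype 𝓛]
    (p : Ω → ℝ) (hp : ∀ ω, 0 ≤ p ω) (hsum : ∑ ω, p ω = 1)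
    (Y : Bool → Ω → ℝ) (A : Ω → Bool) (L : Ω → 𝓛)
    (gopt : 𝓛 → Bool) (gsup : Bool → 𝓛 → Bool)
    -- `gopt l` maximizes `a ↦ E[Yᵃ | L = l]`
    (hopt : ∀ l, pr p (fun ω => L ω = l) > 0 →
      ∀ a, cex p (Y a) (fun ω => L ω = l) ≤ cex p (Y (gopt l)) (fun ω => L ω = l))
    -- `gsup a' l` maximizes `a ↦ E[Yᵃ | A = a', L = l]`
    (hsup : ∀ a' l, pr p (fun ω => A ω = a' ∧ L ω = l) > 0 →
      ∀ a, cex p (Y a) (fun ω => A ω = a' ∧ L ω = l) ≤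
        cex p (Y (gsup a' l)) (fun ω => A ω = a' ∧ L ω = l)) :
    ∀ l, pr p (fun ω => L ω = l) > 0 →
      cex p (fun ω => Y (gopt l) ω) (fun ω => L ω = l) ≤
      cex p (fun ω => Y (gsup (A ω) l) ω) (fun ω => L ω = l) :=
  stmt0_general p hp Y A L gopt gsup hsup
end

section
/- Under consistency and positivity, the superoptimal regime satisfies: g_sup(a',l) = a' if E[Y | L=l] ≥ E[Y^{1−a'} | L=l], and g_sup(a',l) = 1−a' if E[Y | L=l] < E[Y^{1−a'} | L=l], for all a' ∈ {0,1} and l ∈ 𝓛. Here g_sup(a',l) = argmax_{a∈{0,1}} E[Yᵃ | A=a', L=l] (with ties resolved toward a'). -/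
open scoped Classical
open Finset

/-- Corollary 1: under consistency and positivity, the superoptimal regime keeps the
natural treatment `a'` iff `E[Y | L = l] ≥ E[Y^{1−a'} | L = l]`, and otherwise flips it. -/
theorem stmt2
    {Ω 𝓛 : Type*} [Fintype Ω] [Fintype 𝓛]
    (p : Ω → ℝ) (hp : ∀ ω, 0 ≤ p ω) (hsum : ∑ ω, p ω = 1)
    (Y : Bool → Ω → ℝ) (Yo : Ω → ℝ) (A : Ω → Bool) (L : Ω → 𝓛)
    (gsup : Bool → 𝓛 → Bool)
    -- consistency
    (hcons : ∀ ω, 0 < p ω → Yo ω = Y (A ω) ω)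
    -- positivity
    (hpos : ∀ (a : Bool) (l : 𝓛), pr p (fun ω => L ω = l) > 0 →
      cpr p (fun ω => A ω = a) (fun ω => L ω = l) > 0)
    -- `gsup a' l` is the argmax of `a ↦ E[Yᵃ | A = a', L = l]`, ties resolved toward `a'`
    (hgsup : ∀ a' l, gsup a' l =
      if cex p (Y a') (fun ω => A ω = a' ∧ L ω = l) ≥
         cex p (Y (!a')) (fun ω => A ω = a' ∧ L ω = l) then a' else !a') :
    ∀ (a' : Bool) (l : 𝓛), pr p (fun ω => L ω = l) > 0 →
      ((cex p Yo (fun ω => L ω = l) ≥ cex p (Y (!a')) (fun ω => L ω = l) →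
          gsup a' l = a') ∧
       (cex p Yo (fun ω => L ω = l) < cex p (Y (!a')) (fun ω => L ω = l) →
          gsup a' l = !a')) := by
  intro a' l hL
  have hAL : pr p (fun ω => A ω = a' ∧ L ω = l) > 0 := by
    have h := hpos a' l hL
    unfold cpr at h
    rcases div_pos_iff.mp h with ⟨h1, _⟩ | ⟨_, h2⟩
    · exact h1
    · linarith
  set D : ℝ := ∑ ω, if A ω = a' ∧ L ω = l then p ω * (Y a' ω - Y (!a') ω) else 0 with hD
  have key1 : cex p Yo (fun ω => L ω = l) - cex p (Y (!a')) (fun ω => L ω = l)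
      = D / pr p (fun ω => L ω = l) := by
    unfold cex
    rw [div_sub_div_same]
    congr 1
    rw [← Finset.sum_sub_distrib]
    apply Finset.sum_congr rfl
    intro ω _
    by_cases hl : L ω = l
    · simp only [hl, if_true, and_true]
      by_cases hpω : p ω = 0
      · simp [hpω]
      · have hpω' : 0 < p ω := lt_of_le_of_ne (hp ω) (Ne.symm hpω)
        have hc := hcons ω hpω'
        by_cases ha : A ω = a'
        · simp only [ha, if_true, hc]
          ring
        · have ha' : A ω = !a' := by
            cases a' <;> cases h : A ω <;> simp_all
          simp [ha, hc, ha']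
    · simp [hl]
  have key2 : cex p (Y a') (fun ω => A ω = a' ∧ L ω = l)
      - cex p (Y (!a')) (fun ω => A ω = a' ∧ L ω = l)
      = D / pr p (fun ω => A ω = a' ∧ L ω = l) := by
    unfold cex
    rw [div_sub_div_same]
    congr 1
    rw [← Finset.sum_sub_distrib]
    apply Finset.sum_congr rfl
    intro ω _
    by_cases h : A ω = a' ∧ L ω = l <;> simp [h] <;> ring
  constructor
  · intro h
    have h1 : 0 ≤ D / pr p (fun ω => L ω = l) := by rw [← key1]; linarith
    have hD0 : 0 ≤ D := by
      rcases div_nonneg_iff.mp h1 with ⟨h2, _⟩ | ⟨_, h3⟩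
      · exact h2
      · linarith
    have h2 : cex p (Y a') (fun ω => A ω = a' ∧ L ω = l) ≥
        cex p (Y (!a')) (fun ω => A ω = a' ∧ L ω = l) := by
      have : 0 ≤ D / pr p (fun ω => A ω = a' ∧ L ω = l) := div_nonneg hD0 hAL.le
      linarith [key2]
    rw [hgsup a' l, if_pos h2]
  · intro h
    have h1 : D / pr p (fun ω => L ω = l) < 0 := by rw [← key1]; linarith
    have hD0 : D < 0 := by
      rcases div_neg_iff.mp h1 with ⟨_, h3⟩ | ⟨h2, _⟩
      · linarith
      · exact h2
    have h2 : ¬ (cex p (Y a') (fun ω => A ω = a' ∧ L ω = l) ≥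
        cex p (Y (!a')) (fun ω => A ω = a' ∧ L ω = l)) := by
      have : D / pr p (fun ω => A ω = a' ∧ L ω = l) < 0 := div_neg_of_neg_of_pos hD0 hAL
      push_neg
      linarith [key2]
    rw [hgsup a' l, if_neg h2]
end

section
/- Define τ_l(a') = E[Y¹ | A=a', L=l] − E[Y⁰ | A=a', L=l] and define γ(l) = 0 if (τ_l(1)≥0 ∧ τ_l(0)≥0) ∨ (τ_l(1)<0 ∧ τ_l(0)<0), γ(l) = 1 if τ_l(1)≥0 ∧ τ_l(0)<0, and γ(l) = 2 if τ_l(1)<0 ∧ τ_l(0)≥0. Then almost surely, g_sup(A, L) = g_opt(L) when γ(L)=0, g_sup(A, L) = A when γ(L)=1, and g_sup(A, L) = 1−A when γ(L)=2. -/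
open scoped Classical
open Finset

/-! The superoptimal rule compares `E[Y¹ | A = a', L = l]` with `E[Y⁰ | A = a', L = l]`, i.e. it
treats according to the sign of `τ_l(a')`, while the optimal rule treats according to the sign of
`E[Y¹ - Y⁰ | L = l]`. By the law of total expectation the latter is the average
`τ_l(1) P(A = 1 | l) + τ_l(0) P(A = 0 | l)` with positive weights, so when `τ_l(1)` and `τ_l(0)`
have the same sign (`γ(l) = 0`) both rules agree; otherwise the superoptimal rule is read off
directly from the signs of `τ_l(1)` and `τ_l(0)`. -/

section Probability

variable {Ω : Type*} [Fintype Ω] {p : Ω → ℝ}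

lemma pr_pos_of_pos {E : Ω → Prop} (hp : ∀ ω, 0 ≤ p ω) {ω : Ω} (hE : E ω) (hω : 0 < p ω) :
    0 < pr p E := by
  refine hω.trans_le ?_
  calc p ω = if E ω then p ω else 0 := (if_pos hE).symm
    _ ≤ pr p E := single_le_sum (f := fun x => if E x then p x else 0)
        (fun x _ => by split_ifs <;> simp [hp x]) (mem_univ ω)

lemma sum_ite_eq_add_of_bool (B : Ω → Bool) (E : Ω → Prop) (g : Ω → ℝ) :
    (∑ x, if E x then g x else 0) =
      (∑ x, if B x = true ∧ E x then g x else 0) + ∑ x, if B x = false ∧ E x then g x else 0 := by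
  rw [← sum_add_distrib]
  refine sum_congr rfl fun x _ => ?_
  cases B x <;> simp

lemma cex_mul_pr {E : Ω → Prop} (f : Ω → ℝ) (hE : pr p E ≠ 0) :
    cex p f E * pr p E = ∑ x, if E x then p x * f x else 0 :=
  div_mul_cancel₀ _ hE

lemma cex_mul_pr_eq_add (f : Ω → ℝ) (B : Ω → Bool) {E : Ω → Prop} (hE : pr p E ≠ 0)
    (hE₁ : pr p (fun x => B x = true ∧ E x) ≠ 0) (hE₀ : pr p (fun x => B x = false ∧ E x) ≠ 0) :
    cex p f E * pr p E =
      cex p f (fun x => B x = true ∧ E x) * pr p (fun x => B x = true ∧ E x) +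
        cex p f (fun x => B x = false ∧ E x) * pr p (fun x => B x = false ∧ E x) := by
  rw [cex_mul_pr f hE, cex_mul_pr f hE₁, cex_mul_pr f hE₀, sum_ite_eq_add_of_bool B]
  congr!

end Probability

section Regimes

/-- The function `γ` of the paper, as a function of `(τ_l(1), τ_l(0))`. -/
noncomputable def signRegime (x y : ℝ) : ℕ :=
  if (0 ≤ x ∧ 0 ≤ y) ∨ (x < 0 ∧ y < 0) then 0 else if 0 ≤ x ∧ y < 0 then 1 else 2

variable {x y : ℝ}

lemma sameSign_of_signRegime_eq_zero (h : signRegime x y = 0) :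
    (0 ≤ x ∧ 0 ≤ y) ∨ (x < 0 ∧ y < 0) := by
  grind [signRegime]

lemma nonneg_and_neg_of_signRegime_eq_one (h : signRegime x y = 1) : 0 ≤ x ∧ y < 0 := by
  grind [signRegime]

lemma neg_and_nonneg_of_signRegime_eq_two (h : signRegime x y = 2) : x < 0 ∧ 0 ≤ y := by
  grind [signRegime]

lemma decide_nonneg_eq_of_sameSign {t w : Bool → ℝ} (hw : ∀ b, 0 < w b)
    (h : (0 ≤ t true ∧ 0 ≤ t false) ∨ (t true < 0 ∧ t false < 0)) (a : Bool) :
    decide (0 ≤ t a) = decide (0 ≤ t true * w true + t false * w false) := by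
  have hw₁ := hw true
  have hw₀ := hw false
  rcases h with ⟨h₁, h₀⟩ | ⟨h₁, h₀⟩
  · have : 0 ≤ t true * w true + t false * w false := by positivity
    cases a <;> simp [*]
  · have : t true * w true + t false * w false < 0 := by nlinarith
    cases a <;> simp [not_le.mpr, *]

end Regimes

theorem stmt5_general
    {Ω 𝓛 : Type*} [Fintype Ω] [Fintype 𝓛]
    (p : Ω → ℝ) (hp : ∀ ω, 0 ≤ p ω)
    (Y : Bool → Ω → ℝ) (A : Ω → Bool) (L : Ω → 𝓛)
    (gopt : 𝓛 → Bool) (gsup : Bool → 𝓛 → Bool)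
    (τ : Bool → 𝓛 → ℝ) (γ : 𝓛 → ℕ)
    -- positivity
    (hpos : ∀ (a : Bool) (l : 𝓛), pr p (fun ω => L ω = l) > 0 →
      pr p (fun ω => A ω = a ∧ L ω = l) > 0)
    -- τ_l(a') = E[Y¹ | A = a', L = l] − E[Y⁰ | A = a', L = l]
    (hτ : ∀ a' l, τ a' l =
      cex p (Y true) (fun ω => A ω = a' ∧ L ω = l) -
      cex p (Y false) (fun ω => A ω = a' ∧ L ω = l))
    (hγ : ∀ l, γ l =
      if (0 ≤ τ true l ∧ 0 ≤ τ false l) ∨ (τ true l < 0 ∧ τ false l < 0) then 0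
      else if 0 ≤ τ true l ∧ τ false l < 0 then 1 else 2)
    -- optimal regime, ties broken toward `a = 1`
    (hgopt : ∀ l, gopt l =
      if cex p (Y true) (fun ω => L ω = l) ≥ cex p (Y false) (fun ω => L ω = l)
      then true else false)
    -- superoptimal regime, ties broken toward `a = 1`
    (hgsup : ∀ a' l, gsup a' l =
      if cex p (Y true) (fun ω => A ω = a' ∧ L ω = l) ≥
         cex p (Y false) (fun ω => A ω = a' ∧ L ω = l)
      then true else false) :
    ∀ ω, 0 < p ω →
      ((γ (L ω) = 0 → gsup (A ω) (L ω) = gopt (L ω)) ∧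
       (γ (L ω) = 1 → gsup (A ω) (L ω) = A ω) ∧
       (γ (L ω) = 2 → gsup (A ω) (L ω) = !(A ω))) := by
  intro ω hω
  set l := L ω
  set t : Bool → ℝ := fun b => τ b l
  set w : Bool → ℝ := fun b => pr p (fun x => A x = b ∧ L x = l)
  have hP : 0 < pr p (fun x => L x = l) := pr_pos_of_pos hp rfl hω
  have hw (b : Bool) : 0 < w b := hpos b l hP
  have hsup (a : Bool) : gsup a l = decide (0 ≤ t a) := by
    simp [hgsup, t, hτ, sub_nonneg]
  have htotal : (cex p (Y true) (fun x => L x = l) - cex p (Y false) (fun x => L x = l)) *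
      pr p (fun x => L x = l) = t true * w true + t false * w false := by
    rw [sub_mul, cex_mul_pr_eq_add _ A hP.ne' (hw true).ne' (hw false).ne',
      cex_mul_pr_eq_add _ A hP.ne' (hw true).ne' (hw false).ne']
    simp only [t, w, hτ]
    ring
  have hopt : gopt l = decide (0 ≤ t true * w true + t false * w false) := by
    simp only [← htotal, mul_nonneg_iff_of_pos_right hP, sub_nonneg, hgopt]
    simp
  have hγl : γ l = signRegime (t true) (t false) := hγ l
  refine ⟨fun h => ?_, fun h => ?_, fun h => ?_⟩
  · rw [hsup, hopt]
    exact decide_nonneg_eq_of_sameSign hw (sameSign_of_signRegime_eq_zero (hγl ▸ h)) (A ω)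
  · obtain ⟨h₁, h₀⟩ := nonneg_and_neg_of_signRegime_eq_one (hγl ▸ h)
    cases A ω <;> simp [hsup, h₁, h₀]
  · obtain ⟨h₁, h₀⟩ := neg_and_nonneg_of_signRegime_eq_two (hγl ▸ h)
    cases A ω <;> simp [hsup, h₁, h₀]

/-- Proposition 3: the superoptimal regime can be reformulated via the function `γ`:
follow `g_opt` when `γ(L) = 0`, follow the natural treatment when `γ(L) = 1`, and
do the opposite of the natural treatment when `γ(L) = 2`, almost surely. -/
theorem stmt5
    {Ω 𝓛 : Type*} [Fintype Ω] [Fintype 𝓛]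
    (p : Ω → ℝ) (hp : ∀ ω, 0 ≤ p ω) (hsum : ∑ ω, p ω = 1)
    (Y : Bool → Ω → ℝ) (A : Ω → Bool) (L : Ω → 𝓛)
    (gopt : 𝓛 → Bool) (gsup : Bool → 𝓛 → Bool)
    (τ : Bool → 𝓛 → ℝ) (γ : 𝓛 → ℕ)
    -- positivity
    (hpos : ∀ (a : Bool) (l : 𝓛), pr p (fun ω => L ω = l) > 0 →
      pr p (fun ω => A ω = a ∧ L ω = l) > 0)
    -- τ_l(a') = E[Y¹ | A = a', L = l] − E[Y⁰ | A = a', L = l]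
    (hτ : ∀ a' l, τ a' l =
      cex p (Y true) (fun ω => A ω = a' ∧ L ω = l) -
      cex p (Y false) (fun ω => A ω = a' ∧ L ω = l))
    (hγ : ∀ l, γ l =
      if (0 ≤ τ true l ∧ 0 ≤ τ false l) ∨ (τ true l < 0 ∧ τ false l < 0) then 0
      else if 0 ≤ τ true l ∧ τ false l < 0 then 1 else 2)
    -- optimal regime, ties broken toward `a = 1`
    (hgopt : ∀ l, gopt l =
      if cex p (Y true) (fun ω => L ω = l) ≥ cex p (Y false) (fun ω => L ω = l)
      then true else false)
    -- superoptimal regime, ties broken toward `a = 1`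
    (hgsup : ∀ a' l, gsup a' l =
      if cex p (Y true) (fun ω => A ω = a' ∧ L ω = l) ≥
         cex p (Y false) (fun ω => A ω = a' ∧ L ω = l)
      then true else false) :
    ∀ ω, 0 < p ω →
      ((γ (L ω) = 0 → gsup (A ω) (L ω) = gopt (L ω)) ∧
       (γ (L ω) = 1 → gsup (A ω) (L ω) = A ω) ∧
       (γ (L ω) = 2 → gsup (A ω) (L ω) = !(A ω))) :=
  stmt5_general p hp Y A L gopt gsup τ γ hpos hτ hγ hgopt hgsup
end

section
/- If Yᵃ ⫫ A | L for a ∈ {0,1} and Y = Y^A a.s. (consistency), then the observed mean E[Y] lies in the interval [min_{g:𝓛→{0,1}} E[Y^{g(L)}], max_{g:𝓛→{0,1}} E[Y^{g(L)}]]. -/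
open scoped Classical
open Finset

/-- Under L-exchangeability and consistency, the observed mean `E[Y]` lies in the interval
spanned by the values of deterministic regimes `g : 𝓛 → {0,1}`. -/
theorem stmt10
    {Ω 𝓛 : Type*} [Fintype Ω] [Fintype 𝓛]
    (p : Ω → ℝ) (hp : ∀ ω, 0 ≤ p ω) (hsum : ∑ ω, p ω = 1)
    (Y : Bool → Ω → ℝ) (Yo : Ω → ℝ) (A : Ω → Bool) (L : Ω → 𝓛)
    -- positivity
    (hpos : ∀ (a' : Bool) (l : 𝓛), pr p (fun ω => L ω = l) > 0 →
      pr p (fun ω => A ω = a' ∧ L ω = l) > 0)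
    -- L-exchangeability as conditional mean independence
    (hexch : ∀ (a a' : Bool) (l : 𝓛), pr p (fun ω => A ω = a' ∧ L ω = l) > 0 →
      cex p (Y a) (fun ω => A ω = a' ∧ L ω = l) = cex p (Y a) (fun ω => L ω = l))
    -- consistency
    (hcons : ∀ ω, 0 < p ω → Yo ω = Y (A ω) ω) :
    (⨅ g : 𝓛 → Bool, ex p (fun ω => Y (g (L ω)) ω)) ≤ ex p Yo ∧
    ex p Yo ≤ ⨆ g : 𝓛 → Bool, ex p (fun ω => Y (g (L ω)) ω) := by
  classical
  have prnn : ∀ (E : Ω → Prop), 0 ≤ pr p E := by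
    intro E
    apply Finset.sum_nonneg
    intro ω _
    split
    · exact hp ω
    · exact le_refl 0
  have hez : ∀ (E : Ω → Prop), pr p E = 0 → ∀ ω, E ω → p ω = 0 := by
    intro E h ω hω
    have := (Finset.sum_eq_zero_iff_of_nonneg (fun ω _ => by
      split
      · exact hp ω
      · exact le_refl 0)).mp h ω (Finset.mem_univ ω)
    simpa [hω] using this
  have hB : ∀ (a : Bool) (l : 𝓛),
      (∑ ω, if L ω = l then p ω * Y a ω else 0)
        = pr p (fun ω => L ω = l) * cex p (Y a) (fun ω => L ω = l) := by
    intro a l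
    by_cases h : pr p (fun ω => L ω = l) = 0
    · rw [h, zero_mul]
      apply Finset.sum_eq_zero
      intro ω _
      split
      · rw [hez _ h ω ‹_›, zero_mul]
      · rfl
    · unfold cex
      field_simp
  have hA1 : ∀ l, (∑ ω, if L ω = l then p ω * Yo ω else 0)
      = (∑ ω, if A ω = false ∧ L ω = l then p ω * Y false ω else 0)
      + (∑ ω, if A ω = true ∧ L ω = l then p ω * Y true ω else 0) := by
    intro l
    rw [← Finset.sum_add_distrib]
    apply Finset.sum_congr rfl
    intro ω _
    rcases lt_or_eq_of_le (hp ω) with hpω | hpω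
    · rw [hcons ω hpω]
      cases hA' : A ω <;> by_cases hl : L ω = l <;> simp [hA', hl]
    · simp [← hpω]
  have hA2 : ∀ (a : Bool) (l : 𝓛),
      (∑ ω, if A ω = a ∧ L ω = l then p ω * Y a ω else 0)
        = pr p (fun ω => A ω = a ∧ L ω = l) * cex p (Y a) (fun ω => L ω = l) := by
    intro a l
    by_cases h : pr p (fun ω => A ω = a ∧ L ω = l) = 0
    · rw [h, zero_mul]
      apply Finset.sum_eq_zero
      intro ω _
      split
      · rw [hez _ h ω ‹_›, zero_mul]
      · rfl
    · have hpos' : pr p (fun ω => A ω = a ∧ L ω = l) > 0 :=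
        lt_of_le_of_ne (prnn _) (Ne.symm h)
      rw [← hexch a a l hpos']
      unfold cex
      field_simp
  have hC : ∀ l, pr p (fun ω => A ω = false ∧ L ω = l)
      + pr p (fun ω => A ω = true ∧ L ω = l) = pr p (fun ω => L ω = l) := by
    intro l
    unfold pr
    rw [← Finset.sum_add_distrib]
    apply Finset.sum_congr rfl
    intro ω _
    cases hA' : A ω <;> by_cases hl : L ω = l <;> simp [hA', hl]
  have hfib : ∀ f : Ω → ℝ, (∑ ω, f ω) = ∑ l, ∑ ω, if L ω = l then f ω else 0 := by
    intro f
    rw [Finset.sum_comm]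
    apply Finset.sum_congr rfl
    intro ω _
    simp
  have hg : ∀ g : 𝓛 → Bool, ex p (fun ω => Y (g (L ω)) ω)
      = ∑ l, pr p (fun ω => L ω = l) * cex p (Y (g l)) (fun ω => L ω = l) := by
    intro g
    unfold ex
    rw [hfib]
    apply Finset.sum_congr rfl
    intro l _
    rw [← hB (g l) l]
    apply Finset.sum_congr rfl
    intro ω _
    by_cases h : L ω = l <;> simp [h]
  have hYo : ex p Yo = ∑ l,
      (pr p (fun ω => A ω = false ∧ L ω = l) * cex p (Y false) (fun ω => L ω = l)
      + pr p (fun ω => A ω = true ∧ L ω = l) * cex p (Y true) (fun ω => L ω = l)) := by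
    unfold ex
    rw [hfib]
    exact Finset.sum_congr rfl fun l _ => by rw [hA1 l, hA2 false l, hA2 true l]
  set gmin : 𝓛 → Bool := fun l =>
    if cex p (Y false) (fun ω => L ω = l) ≤ cex p (Y true) (fun ω => L ω = l)
    then false else true with hgmin
  set gmax : 𝓛 → Bool := fun l =>
    if cex p (Y false) (fun ω => L ω = l) ≤ cex p (Y true) (fun ω => L ω = l)
    then true else false with hgmax
  have hmin : ex p (fun ω => Y (gmin (L ω)) ω) ≤ ex p Yo := by
    rw [hg gmin, hYo]
    apply Finset.sum_le_sum
    intro l _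
    have h1 := (hC l).symm
    have hpf : (0:ℝ) ≤ pr p (fun ω => A ω = false ∧ L ω = l) := prnn _
    have hpt : (0:ℝ) ≤ pr p (fun ω => A ω = true ∧ L ω = l) := prnn _
    rw [h1]
    by_cases hle : cex p (Y false) (fun ω => L ω = l) ≤ cex p (Y true) (fun ω => L ω = l)
    · simp only [hgmin, if_pos hle]
      nlinarith
    · simp only [hgmin, if_neg hle]
      push_neg at hle
      nlinarith
  have hmax : ex p Yo ≤ ex p (fun ω => Y (gmax (L ω)) ω) := by
    rw [hg gmax, hYo]
    apply Finset.sum_le_sum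
    intro l _
    have h1 := (hC l).symm
    have hpf : (0:ℝ) ≤ pr p (fun ω => A ω = false ∧ L ω = l) := prnn _
    have hpt : (0:ℝ) ≤ pr p (fun ω => A ω = true ∧ L ω = l) := prnn _
    rw [h1]
    by_cases hle : cex p (Y false) (fun ω => L ω = l) ≤ cex p (Y true) (fun ω => L ω = l)
    · simp only [hgmax, if_pos hle]
      nlinarith
    · simp only [hgmax, if_neg hle]
      push_neg at hle
      nlinarith
  constructor
  · exact le_trans (ciInf_le ((Set.finite_range _).bddBelow) gmin) hmin
  · exact le_trans hmax (le_ciSup (f := fun g : 𝓛 → Bool => ex p (fun ω => Y (g (L ω)) ω)) ((Set.finite_range _).bddAbove) gmax)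
end

section
/- Suppose treatment homogeneity holds: δ(l) = δ̃(l,u) for all u, where δ(l) = P(A=1|Z=1,L=l) − P(A=1|Z=0,L=l) and δ̃(l,u) = P(A=1|Z=1,L=l,U=u) − P(A=1|Z=0,L=l,U=u), together with IV independence (Z ⫫ U | L), latent unconfoundedness (Yᵃ ⫫ (Z,A) | L,U), exclusion restriction, consistency, δ(l) ≠ 0, and IV positivity (0 < P(Z=1|L=l) < 1). Then E[Yᵃ | L=l] = E[ (2Z−1)·1{A=a}·Y·(2a−1) / (δ(L)·f(Z|L)) | L=l ], where f(z|l) = P(Z=z|L=l). -/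
/-
Stratify by the latent confounder: fix `L = l`, `U = u`. On the cell `{Z = z, A = a, L = l, U = u}`
the outcome has conditional mean `E[Yᵃ | l, u]` by latent unconfoundedness and consistency, and IV
independence gives `P(Z = z, l, u) = f(z|l) P(l, u)`. Weighting the cells by `1 / f(z|l)` and
contrasting `z = 1` with `z = 0` therefore produces `E[Yᵃ | l, u] P(l, u)` times the stratum
compliance difference `δ̃(l, u)`, with the sign of `2a - 1` since `P(A = 0 | ·) = 1 - P(A = 1 | ·)`.
Treatment homogeneity turns `δ̃(l, u)` into `δ(l)`, which cancels against the weight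
`(2a - 1) / δ(l)`; summing over `u` gives `E[Yᵃ | L = l] P(L = l)`.
-/

open scoped Classical
open Finset

section Sums

variable {Ω : Type*} [Fintype Ω] (p : Ω → ℝ)

noncomputable def sumOn (g : Ω → ℝ) (E : Ω → Prop) : ℝ :=
  ∑ ω, if E ω then p ω * g ω else 0

theorem cex_eq_sumOn_div (g : Ω → ℝ) (E : Ω → Prop) : cex p g E = sumOn p g E / pr p E :=
  rfl

theorem sumOn_eq_cex_mul_pr {E : Ω → Prop} (hE : pr p E ≠ 0) (g : Ω → ℝ) :
    sumOn p g E = cex p g E * pr p E := by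
  rw [cex_eq_sumOn_div, div_mul_cancel₀ _ hE]

theorem pr_eq_sumOn_one (E : Ω → Prop) : pr p E = sumOn p (fun _ => 1) E := by
  simp only [pr, sumOn, mul_one]

theorem sumOn_congr_event {E F : Ω → Prop} (h : ∀ ω, E ω ↔ F ω) (g : Ω → ℝ) :
    sumOn p g E = sumOn p g F := by
  simp only [sumOn, h]

theorem pr_congr {E F : Ω → Prop} (h : ∀ ω, E ω ↔ F ω) : pr p E = pr p F := by
  simp only [pr_eq_sumOn_one, sumOn_congr_event p h]

theorem cpr_congr {E E' : Ω → Prop} (h : ∀ ω, E ω ↔ E' ω) (F : Ω → Prop) :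
    cpr p E F = cpr p E' F := by
  simp only [cpr, h]

theorem sumOn_congr_fun (hp : ∀ ω, 0 ≤ p ω) {E : Ω → Prop} {g h : Ω → ℝ}
    (hgh : ∀ ω, E ω → 0 < p ω → g ω = h ω) : sumOn p g E = sumOn p h E := by
  refine Finset.sum_congr rfl fun ω _ => ?_
  split_ifs with hE
  · rcases (hp ω).eq_or_lt with h0 | hpos
    · simp [← h0]
    · rw [hgh ω hE hpos]
  · rfl

theorem sumOn_const_mul (c : ℝ) (g : Ω → ℝ) (E : Ω → Prop) :
    sumOn p (fun ω => c * g ω) E = c * sumOn p g E := by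
  simp only [sumOn, Finset.mul_sum]
  refine Finset.sum_congr rfl fun ω _ => ?_
  split_ifs <;> ring

theorem sumOn_ite (P E : Ω → Prop) (g : Ω → ℝ) :
    sumOn p (fun ω => if P ω then g ω else 0) E = sumOn p g (fun ω => P ω ∧ E ω) := by
  refine Finset.sum_congr rfl fun ω _ => ?_
  by_cases hP : P ω <;> by_cases hE : E ω <;> simp [hP, hE]

theorem sumOn_eq_sum_fiber {ι : Type*} [Fintype ι] (X : Ω → ι) (g : Ω → ℝ) (E : Ω → Prop) :
    sumOn p g E = ∑ i, sumOn p g (fun ω => X ω = i ∧ E ω) := by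
  simp only [sumOn]
  rw [Finset.sum_comm]
  refine Finset.sum_congr rfl fun ω _ => ?_
  rw [Fintype.sum_eq_single (X ω)]
  · simp
  · exact fun i hi => if_neg fun h => hi h.1.symm

theorem pr_mono (hp : ∀ ω, 0 ≤ p ω) {E F : Ω → Prop} (h : ∀ ω, E ω → F ω) :
    pr p E ≤ pr p F := by
  refine Finset.sum_le_sum fun ω _ => ?_
  by_cases hE : E ω
  · simp [hE, h ω hE]
  · by_cases hF : F ω <;> simp [hE, hF, hp ω]

theorem pr_and_add_pr_not_and (E F : Ω → Prop) :
    pr p (fun ω => E ω ∧ F ω) + pr p (fun ω => ¬E ω ∧ F ω) = pr p F := by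
  rw [pr, pr, pr, ← Finset.sum_add_distrib]
  refine Finset.sum_congr rfl fun ω _ => ?_
  by_cases hE : E ω <;> simp [hE]

theorem pr_and_eq_cpr_mul {F : Ω → Prop} (hF : pr p F ≠ 0) (E : Ω → Prop) :
    pr p (fun ω => E ω ∧ F ω) = cpr p E F * pr p F :=
  (div_mul_cancel₀ _ hF).symm

theorem cpr_not {F : Ω → Prop} (hF : pr p F ≠ 0) (E : Ω → Prop) :
    cpr p (fun ω => ¬E ω) F = 1 - cpr p E F := by
  rw [eq_sub_iff_add_eq, cpr, cpr, ← add_div, add_comm, pr_and_add_pr_not_and, div_self hF]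

theorem pr_and_and_eq_of_cpr_eq {E F G : Ω → Prop} (hFG : pr p (fun ω => F ω ∧ G ω) ≠ 0)
    (h : cpr p E (fun ω => F ω ∧ G ω) = cpr p E G) :
    pr p (fun ω => E ω ∧ F ω ∧ G ω) = cpr p F G * pr p (fun ω => E ω ∧ G ω) := by
  unfold cpr at h ⊢
  rw [div_eq_iff hFG] at h
  rw [h]
  ring

end Sums

section InstrumentalVariable

variable {Ω 𝓛 𝒰 : Type*} [Fintype Ω] (p : Ω → ℝ) (A Z : Ω → Bool)

theorem pr_and_div_sub_pr_and_div (W : Ω → Prop) (f : Bool → ℝ)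
    (hS : ∀ z, pr p (fun ω => Z ω = z ∧ W ω) ≠ 0)
    (hSf : ∀ z, pr p (fun ω => Z ω = z ∧ W ω) = f z * pr p W) (a : Bool) :
    pr p (fun ω => Z ω = true ∧ A ω = a ∧ W ω) / f true -
        pr p (fun ω => Z ω = false ∧ A ω = a ∧ W ω) / f false =
      (if a then 1 else -1) * (cpr p (fun ω => A ω = true) (fun ω => Z ω = true ∧ W ω) -
        cpr p (fun ω => A ω = true) (fun ω => Z ω = false ∧ W ω)) * pr p W := by
  have key : ∀ z, pr p (fun ω => Z ω = z ∧ A ω = a ∧ W ω) / f z =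
      cpr p (fun ω => A ω = a) (fun ω => Z ω = z ∧ W ω) * pr p W := by
    intro z
    have hf : f z ≠ 0 := left_ne_zero_of_mul (hSf z ▸ hS z)
    rw [pr_congr p (fun ω => and_left_comm), pr_and_eq_cpr_mul p (hS z), hSf z]
    field_simp
  rw [key, key]
  cases a
  · have hnot : ∀ ω, A ω = false ↔ ¬A ω = true := fun ω => by simp
    rw [cpr_congr p hnot, cpr_congr p hnot, cpr_not p (hS true), cpr_not p (hS false)]
    simp only [Bool.false_eq_true, if_false]
    ring
  · simp only [if_true, one_mul, sub_mul]

variable (L : Ω → 𝓛) (U : Ω → 𝒰)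

noncomputable def ivIntegrand (Yo : Ω → ℝ) (δ : 𝓛 → ℝ) (f : Bool → 𝓛 → ℝ) (a : Bool)
    (ω : Ω) : ℝ :=
  (if Z ω then (1:ℝ) else -1) * (if A ω = a then (1:ℝ) else 0) * Yo ω *
    (if a then (1:ℝ) else -1) / (δ (L ω) * f (Z ω) (L ω))

variable {Y : Bool → Ω → ℝ} {Yo : Ω → ℝ}

theorem pr_instrument_and_eq_cpr_mul {l : 𝓛} {u : 𝒰} {z : Bool}
    (hpos : pr p (fun ω => Z ω = z ∧ L ω = l) ≠ 0)
    (hIVind : cpr p (fun ω => U ω = u) (fun ω => Z ω = z ∧ L ω = l) =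
      cpr p (fun ω => U ω = u) (fun ω => L ω = l)) :
    pr p (fun ω => Z ω = z ∧ L ω = l ∧ U ω = u) =
      cpr p (fun ω => Z ω = z) (fun ω => L ω = l) * pr p (fun ω => L ω = l ∧ U ω = u) := by
  rw [pr_congr p (F := fun ω => U ω = u ∧ Z ω = z ∧ L ω = l) fun ω => by tauto,
    pr_congr p (F := fun ω => U ω = u ∧ L ω = l) fun ω => and_comm]
  exact pr_and_and_eq_of_cpr_eq p hpos hIVind

theorem sumOn_ivIntegrand_instrument_and (hp : ∀ ω, 0 ≤ p ω)
    (hcons : ∀ ω, 0 < p ω → Yo ω = Y (A ω) ω)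
    (δ : 𝓛 → ℝ) (f : Bool → 𝓛 → ℝ) (a z : Bool) {l : 𝓛} {W : Ω → Prop}
    (hW : ∀ ω, W ω → L ω = l) :
    sumOn p (ivIntegrand A Z L Yo δ f a) (fun ω => Z ω = z ∧ W ω) =
      (if z then 1 else -1) * (if a then 1 else -1) / (δ l * f z l) *
        sumOn p (Y a) (fun ω => Z ω = z ∧ A ω = a ∧ W ω) := by
  rw [sumOn_congr_event p (fun ω => and_left_comm), ← sumOn_ite p (fun ω => A ω = a),
    ← sumOn_const_mul]
  refine sumOn_congr_fun p hp fun ω ⟨hz, hWω⟩ hpos => ?_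
  rw [ivIntegrand, hz, hW ω hWω]
  by_cases ha : A ω = a
  · rw [if_pos ha, if_pos ha, hcons ω hpos, ha]
    ring
  · simp [ha]

theorem sumOn_ivIntegrand_stratum (hp : ∀ ω, 0 ≤ p ω)
    (hcons : ∀ ω, 0 < p ω → Yo ω = Y (A ω) ω) {δ : 𝓛 → ℝ} {f : Bool → 𝓛 → ℝ} {l : 𝓛} {u : 𝒰}
    (a : Bool)
    (hjointpos : ∀ z a', 0 < pr p (fun ω => Z ω = z ∧ A ω = a' ∧ L ω = l ∧ U ω = u))
    (hf : ∀ z, f z l = cpr p (fun ω => Z ω = z) (fun ω => L ω = l))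
    (hδ : δ l = cpr p (fun ω => A ω = true) (fun ω => Z ω = true ∧ L ω = l ∧ U ω = u) -
      cpr p (fun ω => A ω = true) (fun ω => Z ω = false ∧ L ω = l ∧ U ω = u))
    (hδne : δ l ≠ 0)
    (hIVind : ∀ z, cpr p (fun ω => U ω = u) (fun ω => Z ω = z ∧ L ω = l) =
      cpr p (fun ω => U ω = u) (fun ω => L ω = l))
    (hlat : ∀ z, cex p (Y a) (fun ω => Z ω = z ∧ A ω = a ∧ L ω = l ∧ U ω = u) =
      cex p (Y a) (fun ω => L ω = l ∧ U ω = u)) :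
    sumOn p (ivIntegrand A Z L Yo δ f a) (fun ω => L ω = l ∧ U ω = u) =
      sumOn p (Y a) (fun ω => L ω = l ∧ U ω = u) := by
  have hS : ∀ z, 0 < pr p (fun ω => Z ω = z ∧ L ω = l ∧ U ω = u) := fun z =>
    (hjointpos z true).trans_le (pr_mono p hp fun ω h => ⟨h.1, h.2.2⟩)
  have hW : 0 < pr p (fun ω => L ω = l ∧ U ω = u) :=
    (hS true).trans_le (pr_mono p hp fun ω h => h.2)
  have hSf : ∀ z, pr p (fun ω => Z ω = z ∧ L ω = l ∧ U ω = u) =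
      f z l * pr p (fun ω => L ω = l ∧ U ω = u) := fun z => by
    rw [hf]
    exact pr_instrument_and_eq_cpr_mul p Z L U
      ((hS z).trans_le (pr_mono p hp fun ω h => ⟨h.1, h.2.1⟩)).ne' (hIVind z)
  have hcontrast := pr_and_div_sub_pr_and_div p A Z (fun ω => L ω = l ∧ U ω = u) (fun z => f z l)
    (fun z => (hS z).ne') hSf a
  rw [← hδ] at hcontrast
  have hstratum : ∀ z, sumOn p (ivIntegrand A Z L Yo δ f a)
      (fun ω => Z ω = z ∧ L ω = l ∧ U ω = u) =
      (if z then 1 else -1) * (if a then 1 else -1) / (δ l * f z l) *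
        (cex p (Y a) (fun ω => L ω = l ∧ U ω = u) *
          pr p (fun ω => Z ω = z ∧ A ω = a ∧ L ω = l ∧ U ω = u)) := fun z => by
    rw [sumOn_ivIntegrand_instrument_and p A Z L hp hcons δ f a z fun ω h => h.1,
      sumOn_eq_cex_mul_pr p (hjointpos z a).ne', hlat z]
  calc sumOn p (ivIntegrand A Z L Yo δ f a) (fun ω => L ω = l ∧ U ω = u)
      = ∑ z, sumOn p (ivIntegrand A Z L Yo δ f a) (fun ω => Z ω = z ∧ L ω = l ∧ U ω = u) :=
        sumOn_eq_sum_fiber p Z _ _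
    _ = cex p (Y a) (fun ω => L ω = l ∧ U ω = u) * ((if a then 1 else -1) / δ l *
          (pr p (fun ω => Z ω = true ∧ A ω = a ∧ L ω = l ∧ U ω = u) / f true l -
            pr p (fun ω => Z ω = false ∧ A ω = a ∧ L ω = l ∧ U ω = u) / f false l)) := by
        rw [Fintype.sum_bool, hstratum, hstratum]
        simp only [if_true, Bool.false_eq_true, if_false]
        ring
    _ = cex p (Y a) (fun ω => L ω = l ∧ U ω = u) * pr p (fun ω => L ω = l ∧ U ω = u) := by
        rw [hcontrast]
        field_simp
        cases a <;> norm_num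
    _ = sumOn p (Y a) (fun ω => L ω = l ∧ U ω = u) := (sumOn_eq_cex_mul_pr p hW.ne' _).symm

end InstrumentalVariable

theorem stmt12_general
    {Ω 𝓛 𝒰 : Type*} [Fintype Ω] [Fintype 𝒰]
    (p : Ω → ℝ) (hp : ∀ ω, 0 ≤ p ω)
    (Y : Bool → Ω → ℝ) (Yo : Ω → ℝ) (A Z : Ω → Bool) (L : Ω → 𝓛) (U : Ω → 𝒰)
    (δ : 𝓛 → ℝ) (δt : 𝓛 → 𝒰 → ℝ) (f : Bool → 𝓛 → ℝ)
    -- all conditioning events have positive probability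
    (hjointpos : ∀ (z a : Bool) (l : 𝓛) (u : 𝒰),
      pr p (fun ω => Z ω = z ∧ A ω = a ∧ L ω = l ∧ U ω = u) > 0)
    -- consistency
    (hcons : ∀ ω, 0 < p ω → Yo ω = Y (A ω) ω)
    -- δ̃(l,u) = P(A=1 | Z=1, L=l, U=u) − P(A=1 | Z=0, L=l, U=u)
    (hδt : ∀ l u, δt l u =
      cpr p (fun ω => A ω = true) (fun ω => Z ω = true ∧ L ω = l ∧ U ω = u) -
      cpr p (fun ω => A ω = true) (fun ω => Z ω = false ∧ L ω = l ∧ U ω = u))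
    -- f(z|l) = P(Z=z | L=l)
    (hf : ∀ z l, f z l = cpr p (fun ω => Z ω = z) (fun ω => L ω = l))
    -- treatment homogeneity
    (hhom : ∀ l u, δ l = δt l u)
    -- IV independence: Z ⫫ U | L
    (hIVind : ∀ (u : 𝒰) (z : Bool) (l : 𝓛),
      cpr p (fun ω => U ω = u) (fun ω => Z ω = z ∧ L ω = l) =
      cpr p (fun ω => U ω = u) (fun ω => L ω = l))
    -- latent unconfoundedness: Yᵃ ⫫ (Z, A) | L, U (conditional mean form)
    (hlat : ∀ (a z a' : Bool) (l : 𝓛) (u : 𝒰),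
      cex p (Y a) (fun ω => Z ω = z ∧ A ω = a' ∧ L ω = l ∧ U ω = u) =
      cex p (Y a) (fun ω => L ω = l ∧ U ω = u))
    -- relevance: δ(l) ≠ 0
    (hδne : ∀ l, δ l ≠ 0) :
    ∀ (a : Bool) (l : 𝓛),
      cex p (Y a) (fun ω => L ω = l) =
      cex p (fun ω =>
        (if Z ω then (1:ℝ) else -1) * (if A ω = a then (1:ℝ) else 0) * Yo ω *
          (if a then (1:ℝ) else -1) / (δ (L ω) * f (Z ω) (L ω)))
        (fun ω => L ω = l) := by
  intro a l
  rw [cex_eq_sumOn_div, cex_eq_sumOn_div, sumOn_eq_sum_fiber p U, sumOn_eq_sum_fiber p U]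
  congr 1
  refine Finset.sum_congr rfl fun u _ => ?_
  simp only [sumOn_congr_event p (fun ω => and_comm (a := U ω = u))]
  exact (sumOn_ivIntegrand_stratum p A Z L U hp hcons a (fun z a' => hjointpos z a' l u)
    (fun z => hf z l) ((hhom l u).trans (hδt l u)) (hδne l) (fun z => hIVind u z l)
    (fun z => hlat a z a l u)).symm

/-- IV identification (Cui–Tchetgen Tchetgen type): under latent unconfoundedness,
IV independence, exclusion restriction (built into `Y` depending only on `a`),
consistency, treatment homogeneity, `δ(l) ≠ 0`, and IV positivity,
`E[Yᵃ | L = l] = E[(2Z−1)·1{A=a}·Y·(2a−1)/(δ(L)·f(Z|L)) | L = l]`. -/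
theorem stmt12
    {Ω 𝓛 𝒰 : Type*} [Fintype Ω] [Fintype 𝓛] [Fintype 𝒰]
    (p : Ω → ℝ) (hp : ∀ ω, 0 ≤ p ω) (hsum : ∑ ω, p ω = 1)
    (Y : Bool → Ω → ℝ) (Yo : Ω → ℝ) (A Z : Ω → Bool) (L : Ω → 𝓛) (U : Ω → 𝒰)
    (δ : 𝓛 → ℝ) (δt : 𝓛 → 𝒰 → ℝ) (f : Bool → 𝓛 → ℝ)
    -- all conditioning events have positive probability
    (hjointpos : ∀ (z a : Bool) (l : 𝓛) (u : 𝒰),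
      pr p (fun ω => Z ω = z ∧ A ω = a ∧ L ω = l ∧ U ω = u) > 0)
    -- consistency
    (hcons : ∀ ω, 0 < p ω → Yo ω = Y (A ω) ω)
    -- δ(l) = P(A=1 | Z=1, L=l) − P(A=1 | Z=0, L=l)
    (hδ : ∀ l, δ l =
      cpr p (fun ω => A ω = true) (fun ω => Z ω = true ∧ L ω = l) -
      cpr p (fun ω => A ω = true) (fun ω => Z ω = false ∧ L ω = l))
    -- δ̃(l,u) = P(A=1 | Z=1, L=l, U=u) − P(A=1 | Z=0, L=l, U=u)
    (hδt : ∀ l u, δt l u =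
      cpr p (fun ω => A ω = true) (fun ω => Z ω = true ∧ L ω = l ∧ U ω = u) -
      cpr p (fun ω => A ω = true) (fun ω => Z ω = false ∧ L ω = l ∧ U ω = u))
    -- f(z|l) = P(Z=z | L=l)
    (hf : ∀ z l, f z l = cpr p (fun ω => Z ω = z) (fun ω => L ω = l))
    -- treatment homogeneity
    (hhom : ∀ l u, δ l = δt l u)
    -- IV independence: Z ⫫ U | L
    (hIVind : ∀ (u : 𝒰) (z : Bool) (l : 𝓛),
      cpr p (fun ω => U ω = u) (fun ω => Z ω = z ∧ L ω = l) =
      cpr p (fun ω => U ω = u) (fun ω => L ω = l))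
    -- latent unconfoundedness: Yᵃ ⫫ (Z, A) | L, U (conditional mean form)
    (hlat : ∀ (a z a' : Bool) (l : 𝓛) (u : 𝒰),
      cex p (Y a) (fun ω => Z ω = z ∧ A ω = a' ∧ L ω = l ∧ U ω = u) =
      cex p (Y a) (fun ω => L ω = l ∧ U ω = u))
    -- relevance: δ(l) ≠ 0
    (hδne : ∀ l, δ l ≠ 0)
    -- IV positivity: 0 < f(1|l) < 1
    (hIVpos : ∀ l, 0 < f true l ∧ f true l < 1) :
    ∀ (a : Bool) (l : 𝓛),
      cex p (Y a) (fun ω => L ω = l) =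
      cex p (fun ω =>
        (if Z ω then (1:ℝ) else -1) * (if A ω = a then (1:ℝ) else 0) * Yo ω *
          (if a then (1:ℝ) else -1) / (δ (L ω) * f (Z ω) (L ω)))
        (fun ω => L ω = l) :=
  stmt12_general p hp Y Yo A Z L U δ δt f hjointpos hcons hδt hf hhom hIVind hlat hδne
end

section
/- Under consistency (Y = Y^A a.s.) and positivity P(A=a|L=l) > 0, for any regime g : {0,1} × 𝓛 → {0,1}: E[Y^{g(A,L)}] = E[ 1{g(A,L) ≠ A}·V(A,L) + 1{g(A,L) = A}·E[Y | A, L] ], where V(a,l) = (E[Y^{1−a} | L=l] − E[Y | A=1−a, L=l]·P(A=1−a | L=l)) / P(A=a | L=l). -/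
open scoped Classical
open Finset

/-!
On each cell `{A = a, L = l}` of positive mass the integrand on the right is the conditional
mean of `Y^{g(a,l)}` on that cell: if `g(a,l) = a` this is consistency, and if `g(a,l) = 1 - a`
the law of total expectation over the split of `{L = l}` by `A`, together with consistency on
`{A = 1 - a, L = l}`, gives `V(a,l) = E[Y^{1-a} | A = a, L = l]`. The tower property
`E[E[X | A, L]] = E[X]` then finishes the proof.
-/

namespace DiscreteProb

variable {Ω : Type*} [Fintype Ω] {p : Ω → ℝ}

noncomputable def exOn (p : Ω → ℝ) (f : Ω → ℝ) (E : Ω → Prop) : ℝ :=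
  ∑ ω, if E ω then p ω * f ω else 0

theorem cex_eq_exOn_div_pr (f : Ω → ℝ) (E : Ω → Prop) : cex p f E = exOn p f E / pr p E := rfl

theorem le_pr_of_mem (hp : ∀ ω, 0 ≤ p ω) {E : Ω → Prop} {ω : Ω} (hω : E ω) : p ω ≤ pr p E := by
  have h := Finset.single_le_sum (f := fun ω => if E ω then p ω else 0)
    (fun ω _ => by split_ifs <;> simp [hp ω]) (Finset.mem_univ ω)
  simpa [pr, hω] using h

theorem eq_zero_of_pr_eq_zero (hp : ∀ ω, 0 ≤ p ω) {E : Ω → Prop} (hE : pr p E = 0) {ω : Ω}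
    (hω : E ω) : p ω = 0 :=
  le_antisymm (hE ▸ le_pr_of_mem hp hω) (hp ω)

theorem exOn_congr {f f' : Ω → ℝ} {E : Ω → Prop} (h : ∀ ω, E ω → p ω ≠ 0 → f ω = f' ω) :
    exOn p f E = exOn p f' E := by
  refine Finset.sum_congr rfl fun ω _ => ?_
  split_ifs with hω
  · rcases eq_or_ne (p ω) 0 with h0 | h0
    · simp [h0]
    · rw [h ω hω h0]
  · rfl

theorem cex_congr {f f' : Ω → ℝ} {E : Ω → Prop} (h : ∀ ω, E ω → p ω ≠ 0 → f ω = f' ω) :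
    cex p f E = cex p f' E := by
  rw [cex_eq_exOn_div_pr, cex_eq_exOn_div_pr, exOn_congr h]

theorem ex_congr {f f' : Ω → ℝ} (h : ∀ ω, p ω ≠ 0 → f ω = f' ω) : ex p f = ex p f' := by
  refine Finset.sum_congr rfl fun ω _ => ?_
  rcases eq_or_ne (p ω) 0 with h0 | h0
  · simp [h0]
  · rw [h ω h0]

theorem exOn_const (c : ℝ) (E : Ω → Prop) : exOn p (fun _ => c) E = pr p E * c := by
  rw [exOn, pr, Finset.sum_mul]
  exact Finset.sum_congr rfl fun ω _ => by split_ifs <;> simp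

theorem exOn_eq_exOn_and_add_exOn_and_not (f : Ω → ℝ) (E F : Ω → Prop) :
    exOn p f F = exOn p f (fun ω => E ω ∧ F ω) + exOn p f (fun ω => ¬E ω ∧ F ω) := by
  rw [exOn, exOn, exOn, ← Finset.sum_add_distrib]
  refine Finset.sum_congr rfl fun ω _ => ?_
  by_cases hE : E ω <;> simp [hE]

theorem ex_eq_sum_exOn_fiber {κ : Type*} [Fintype κ] (K : Ω → κ) (f : Ω → ℝ) :
    ex p f = ∑ k, exOn p f (fun ω => K ω = k) := by
  simp only [exOn, ← Finset.sum_filter]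
  exact (Finset.sum_fiberwise _ K _).symm

theorem pr_mul_cex (hp : ∀ ω, 0 ≤ p ω) (f : Ω → ℝ) (E : Ω → Prop) :
    pr p E * cex p f E = exOn p f E := by
  rcases eq_or_ne (pr p E) 0 with hE | hE
  · have : exOn p f E = exOn p (fun _ => 0) E :=
      exOn_congr fun ω hω h0 => absurd (eq_zero_of_pr_eq_zero hp hE hω) h0
    rw [this, exOn_const, hE, zero_mul, zero_mul]
  · rw [cex_eq_exOn_div_pr, mul_div_cancel₀ _ hE]

theorem cpr_mul_cex (hp : ∀ ω, 0 ≤ p ω) (f : Ω → ℝ) (E F : Ω → Prop) :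
    cpr p E F * cex p f (fun ω => E ω ∧ F ω) = exOn p f (fun ω => E ω ∧ F ω) / pr p F := by
  rw [cpr, div_mul_eq_mul_div, pr_mul_cex hp]

theorem ex_cex_fiber (hp : ∀ ω, 0 ≤ p ω) {κ : Type*} [Fintype κ] (K : Ω → κ) (f : Ω → ℝ) :
    ex p (fun ω => cex p f (fun ω' => K ω' = K ω)) = ex p f := by
  rw [ex_eq_sum_exOn_fiber K, ex_eq_sum_exOn_fiber K]
  refine Finset.sum_congr rfl fun k _ => ?_
  rw [exOn_congr (f' := fun _ => cex p f fun ω' => K ω' = k) fun ω hω _ => by rw [hω],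
    exOn_const, pr_mul_cex hp]

theorem cex_eq_cpr_mul_cex_add_cpr_mul_cex (hp : ∀ ω, 0 ≤ p ω) (f : Ω → ℝ) (E F : Ω → Prop) :
    cex p f F = cpr p E F * cex p f (fun ω => E ω ∧ F ω) +
      cpr p (fun ω => ¬E ω) F * cex p f (fun ω => ¬E ω ∧ F ω) := by
  rw [cpr_mul_cex hp, cpr_mul_cex hp, ← add_div, ← exOn_eq_exOn_and_add_exOn_and_not,
    cex_eq_exOn_div_pr]

theorem identification_formula_eq_cex (hp : ∀ ω, 0 ≤ p ω) {𝓛 : Type*}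
    (Y : Bool → Ω → ℝ) (Yo : Ω → ℝ) (A : Ω → Bool) (L : Ω → 𝓛)
    (hcons : ∀ ω, 0 < p ω → Yo ω = Y (A ω) ω) (a : Bool) (l : 𝓛)
    (hA : cpr p (fun ω => A ω = a) (fun ω => L ω = l) ≠ 0) :
    (cex p (Y (!a)) (fun ω => L ω = l) -
        cex p Yo (fun ω => A ω = !a ∧ L ω = l) *
          cpr p (fun ω => A ω = !a) (fun ω => L ω = l)) /
      cpr p (fun ω => A ω = a) (fun ω => L ω = l) =
    cex p (Y (!a)) (fun ω => A ω = a ∧ L ω = l) := by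
  have hYo : cex p Yo (fun ω => A ω = !a ∧ L ω = l) =
      cex p (Y (!a)) (fun ω => A ω = !a ∧ L ω = l) :=
    cex_congr fun ω hω h0 => by rw [hcons ω (lt_of_le_of_ne (hp ω) h0.symm), hω.1]
  have htotal := cex_eq_cpr_mul_cex_add_cpr_mul_cex hp (Y (!a))
    (fun ω => A ω = a) (fun ω => L ω = l)
  simp only [← Bool.eq_not] at htotal
  rw [div_eq_iff hA, hYo, htotal]
  ring

end DiscreteProb

open DiscreteProb

theorem stmt16_general
    {Ω 𝓛 : Type*} [Fintype Ω] [Fintype 𝓛]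
    (p : Ω → ℝ) (hp : ∀ ω, 0 ≤ p ω)
    (Y : Bool → Ω → ℝ) (Yo : Ω → ℝ) (A : Ω → Bool) (L : Ω → 𝓛)
    (g : Bool → 𝓛 → Bool) (V : Bool → 𝓛 → ℝ)
    -- consistency
    (hcons : ∀ ω, 0 < p ω → Yo ω = Y (A ω) ω)
    -- positivity
    (hpos : ∀ (a : Bool) (l : 𝓛), pr p (fun ω => L ω = l) > 0 →
      cpr p (fun ω => A ω = a) (fun ω => L ω = l) > 0)
    -- V(a,l) = (E[Y^{1−a} | L=l] − E[Y | A=1−a, L=l]·P(A=1−a | L=l)) / P(A=a | L=l)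
    (hV : ∀ a l, V a l =
      (cex p (Y (!a)) (fun ω => L ω = l) -
        cex p Yo (fun ω => A ω = !a ∧ L ω = l) *
          cpr p (fun ω => A ω = !a) (fun ω => L ω = l)) /
      cpr p (fun ω => A ω = a) (fun ω => L ω = l)) :
    ex p (fun ω => Y (g (A ω) (L ω)) ω) =
    ex p (fun ω =>
      if g (A ω) (L ω) ≠ A ω then V (A ω) (L ω)
      else cex p Yo (fun ω' => A ω' = A ω ∧ L ω' = L ω)) := by
  rw [← ex_cex_fiber hp (fun ω => (A ω, L ω))]
  refine ex_congr fun ω hω => ?_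
  have hpω : 0 < p ω := lt_of_le_of_ne (hp ω) hω.symm
  have hL : 0 < pr p (fun ω' => L ω' = L ω) := hpω.trans_le (le_pr_of_mem hp rfl)
  simp only [Prod.mk.injEq]
  rw [cex_congr (f' := Y (g (A ω) (L ω))) fun ω' hω' _ => by rw [hω'.1, hω'.2]]
  split_ifs with hg
  · rw [hV, identification_formula_eq_cex hp Y Yo A L hcons _ _ (hpos _ _ hL).ne',
      Bool.eq_not.mpr hg]
  · rw [not_not.mp hg]
    exact cex_congr fun ω' hω' h0 => by
      rw [hcons ω' (lt_of_le_of_ne (hp ω') h0.symm), hω'.1]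

/-- Identification formula for the value of an arbitrary regime `g(A, L)`:
`E[Y^{g(A,L)}] = E[1{g(A,L) ≠ A}·V(A,L) + 1{g(A,L) = A}·E[Y | A, L]]`. -/
theorem stmt16
    {Ω 𝓛 : Type*} [Fintype Ω] [Fintype 𝓛]
    (p : Ω → ℝ) (hp : ∀ ω, 0 ≤ p ω) (hsum : ∑ ω, p ω = 1)
    (Y : Bool → Ω → ℝ) (Yo : Ω → ℝ) (A : Ω → Bool) (L : Ω → 𝓛)
    (g : Bool → 𝓛 → Bool) (V : Bool → 𝓛 → ℝ)
    -- consistency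
    (hcons : ∀ ω, 0 < p ω → Yo ω = Y (A ω) ω)
    -- positivity
    (hpos : ∀ (a : Bool) (l : 𝓛), pr p (fun ω => L ω = l) > 0 →
      cpr p (fun ω => A ω = a) (fun ω => L ω = l) > 0)
    -- V(a,l) = (E[Y^{1−a} | L=l] − E[Y | A=1−a, L=l]·P(A=1−a | L=l)) / P(A=a | L=l)
    (hV : ∀ a l, V a l =
      (cex p (Y (!a)) (fun ω => L ω = l) -
        cex p Yo (fun ω => A ω = !a ∧ L ω = l) *
          cpr p (fun ω => A ω = !a) (fun ω => L ω = l)) /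
      cpr p (fun ω => A ω = a) (fun ω => L ω = l)) :
    ex p (fun ω => Y (g (A ω) (L ω)) ω) =
    ex p (fun ω =>
      if g (A ω) (L ω) ≠ A ω then V (A ω) (L ω)
      else cex p Yo (fun ω' => A ω' = A ω ∧ L ω' = L ω)) :=
  stmt16_general p hp Y Yo A L g V hcons hpos hV
end

section
/- Suppose the conditional means E[Yᵃ | A=a', L=l] are identified for all a ≠ a' via Ψ(a,l) = (ψ₁(a,l) − E[Y | A=a, L=l]·P(A=a | L=l)) / P(A=1−a | L=l), where ψ₁(a,l) = E[Yᵃ | L=l]. Then the superoptimal regime satisfies g_sup(a',l) = a' if and only if E[Y | A=a', L=l] ≥ Ψ(1−a', l), equivalently, using consistency, if and only if E[Y | L=l] ≥ ψ₁(1−a', l). -/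
open scoped Classical
open Finset

/-- Splitting a sum over an event according to a disjoint cover. -/
lemma split_sum_abs {Ω : Type*} [Fintype Ω] (E E0 E1 : Ω → Prop) (g : Ω → ℝ)
    (hdisj : ∀ ω, ¬ (E0 ω ∧ E1 ω)) (hcov : ∀ ω, E ω ↔ (E0 ω ∨ E1 ω)) :
    (∑ ω, if E ω then g ω else 0) =
      (∑ ω, if E0 ω then g ω else 0) + (∑ ω, if E1 ω then g ω else 0) := by
  classical
  rw [← Finset.sum_add_distrib]
  apply Finset.sum_congr rfl
  intro ω _
  by_cases h0 : E0 ω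
  · have h1 : ¬ E1 ω := fun h1 => hdisj ω ⟨h0, h1⟩
    have hE : E ω := (hcov ω).mpr (Or.inl h0)
    simp [h0, h1, hE]
  · by_cases h1 : E1 ω
    · have hE : E ω := (hcov ω).mpr (Or.inr h1)
      simp [h0, h1, hE]
    · have hE : ¬ E ω := fun hE => (hcov ω).mp hE |>.elim h0 h1
      simp [h0, h1, hE]

/-- Identification of the superoptimal regime via `Ψ` and `ψ₁`:
`g_sup(a', l) = a'` iff `E[Y | A = a', L = l] ≥ Ψ(1−a', l)`, equivalently iff
`E[Y | L = l] ≥ ψ₁(1−a', l)`. -/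
theorem stmt18
    {Ω 𝓛 : Type*} [Fintype Ω] [Fintype 𝓛]
    (p : Ω → ℝ) (hp : ∀ ω, 0 ≤ p ω) (hsum : ∑ ω, p ω = 1)
    (Y : Bool → Ω → ℝ) (Yo : Ω → ℝ) (A : Ω → Bool) (L : Ω → 𝓛)
    (gsup : Bool → 𝓛 → Bool) (ψ₁ Ψ : Bool → 𝓛 → ℝ)
    -- consistency
    (hcons : ∀ ω, 0 < p ω → Yo ω = Y (A ω) ω)
    -- positivity
    (hpos : ∀ (a : Bool) (l : 𝓛), pr p (fun ω => L ω = l) > 0 →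
      cpr p (fun ω => A ω = a) (fun ω => L ω = l) > 0)
    -- ψ₁(a, l) = E[Yᵃ | L = l]
    (hψ₁ : ∀ a l, ψ₁ a l = cex p (Y a) (fun ω => L ω = l))
    -- Ψ(a, l) = (ψ₁(a,l) − E[Y | A=a, L=l]·P(A=a | L=l)) / P(A=1−a | L=l)
    (hΨ : ∀ a l, Ψ a l =
      (ψ₁ a l - cex p Yo (fun ω => A ω = a ∧ L ω = l) *
        cpr p (fun ω => A ω = a) (fun ω => L ω = l)) /
      cpr p (fun ω => A ω = !a) (fun ω => L ω = l))
    -- g_sup(a', l) = argmax over a of E[Yᵃ | A = a', L = l], ties favoring a'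
    (hgsup : ∀ a' l, gsup a' l =
      if cex p (Y a') (fun ω => A ω = a' ∧ L ω = l) ≥
         cex p (Y (!a')) (fun ω => A ω = a' ∧ L ω = l) then a' else !a') :
    ∀ (a' : Bool) (l : 𝓛), pr p (fun ω => L ω = l) > 0 →
      ((gsup a' l = a' ↔
          cex p Yo (fun ω => A ω = a' ∧ L ω = l) ≥ Ψ (!a') l) ∧
       (gsup a' l = a' ↔
          cex p Yo (fun ω => L ω = l) ≥ ψ₁ (!a') l)) := by
  intro a' l hq
  classical
  -- disjointness / covering for the split A = a' vs A = !a'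
  have hb1 : ∀ b c : Bool, b = c → b = !c → False := by decide
  have hb2 : ∀ b c : Bool, b ≠ c → b = !c := by decide
  have hdisj : ∀ ω, ¬ ((A ω = a' ∧ L ω = l) ∧ (A ω = !a' ∧ L ω = l)) := by
    intro ω ⟨⟨h1, _⟩, ⟨h2, _⟩⟩
    exact hb1 (A ω) a' h1 h2
  have hcov : ∀ ω, (L ω = l) ↔ ((A ω = a' ∧ L ω = l) ∨ (A ω = !a' ∧ L ω = l)) := by
    intro ω
    constructor
    · intro hL
      by_cases hA : A ω = a'
      · exact Or.inl ⟨hA, hL⟩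
      · exact Or.inr ⟨hb2 (A ω) a' hA, hL⟩
    · rintro (⟨_, hL⟩ | ⟨_, hL⟩) <;> exact hL
  -- positivity of the cells
  have hcell : ∀ a : Bool, 0 < pr p (fun ω => A ω = a ∧ L ω = l) := by
    intro a
    have h := hpos a l hq
    unfold cpr at h
    rcases div_pos_iff.mp h with ⟨h1, _⟩ | ⟨_, h2⟩
    · exact h1
    · linarith
  have hm0 : 0 < pr p (fun ω => A ω = a' ∧ L ω = l) := hcell a'
  have hm1 : 0 < pr p (fun ω => A ω = !a' ∧ L ω = l) := hcell (!a')
  -- split of the marginal probability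
  have hqsplit : pr p (fun ω => L ω = l) =
      pr p (fun ω => A ω = a' ∧ L ω = l) + pr p (fun ω => A ω = !a' ∧ L ω = l) := by
    unfold pr
    exact split_sum_abs _ _ _ p hdisj hcov
  -- law of total expectation (multiplied through)
  have key : ∀ f : Ω → ℝ,
      cex p f (fun ω => L ω = l) * pr p (fun ω => L ω = l) =
      cex p f (fun ω => A ω = a' ∧ L ω = l) * pr p (fun ω => A ω = a' ∧ L ω = l) +
      cex p f (fun ω => A ω = !a' ∧ L ω = l) * pr p (fun ω => A ω = !a' ∧ L ω = l) := by
    intro f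
    unfold cex
    rw [div_mul_cancel₀ _ (ne_of_gt hq), div_mul_cancel₀ _ (ne_of_gt hm0),
      div_mul_cancel₀ _ (ne_of_gt hm1)]
    exact split_sum_abs _ _ _ (fun ω => p ω * f ω) hdisj hcov
  -- consistency at the level of conditional expectations
  have hconsCex : ∀ a : Bool,
      cex p Yo (fun ω => A ω = a ∧ L ω = l) = cex p (Y a) (fun ω => A ω = a ∧ L ω = l) := by
    intro a
    unfold cex
    congr 1
    apply Finset.sum_congr rfl
    intro ω _
    split_ifs with h
    · rcases (hp ω).lt_or_eq with hpω | hpω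
      · rw [hcons ω hpω, h.1]
      · rw [← hpω]; ring
    · rfl
  -- cpr values
  have hcpr : ∀ a : Bool, cpr p (fun ω => A ω = a) (fun ω => L ω = l) =
      pr p (fun ω => A ω = a ∧ L ω = l) / pr p (fun ω => L ω = l) := fun a => rfl
  -- the gsup condition
  have hne : (!a') ≠ a' := by cases a' <;> decide
  have hgsIff : gsup a' l = a' ↔
      cex p (Y a') (fun ω => A ω = a' ∧ L ω = l) ≥
        cex p (Y (!a')) (fun ω => A ω = a' ∧ L ω = l) := by
    rw [hgsup a' l]
    rcases le_or_gt (cex p (Y (!a')) (fun ω => A ω = a' ∧ L ω = l))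
        (cex p (Y a') (fun ω => A ω = a' ∧ L ω = l)) with hc | hc
    · rw [if_pos hc]
      exact ⟨fun _ => hc, fun _ => rfl⟩
    · rw [if_neg (not_le.mpr hc)]
      exact ⟨fun h => absurd h hne, fun h => absurd hc (not_lt.mpr h)⟩
  -- shorthand
  set u := cex p (Y a') (fun ω => A ω = a' ∧ L ω = l) with hu
  set v := cex p (Y (!a')) (fun ω => A ω = a' ∧ L ω = l) with hv
  set w := cex p (Y (!a')) (fun ω => A ω = !a' ∧ L ω = l) with hw
  set m0 := pr p (fun ω => A ω = a' ∧ L ω = l) with hm0d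
  set m1 := pr p (fun ω => A ω = !a' ∧ L ω = l) with hm1d
  set q := pr p (fun ω => L ω = l) with hqd
  -- ψ₁ value
  have hψq : ψ₁ (!a') l * q = v * m0 + w * m1 := by
    rw [hψ₁]; exact key (Y (!a'))
  -- Ψ value
  have hΨval : Ψ (!a') l = v := by
    rw [hΨ]
    simp only [Bool.not_not]
    rw [hconsCex (!a'), hcpr a', hcpr (!a')]
    rw [div_eq_iff (by positivity)]
    have hψv : ψ₁ (!a') l = (v * m0 + w * m1) / q := by
      field_simp at hψq ⊢
      linarith [hψq]
    rw [hψv]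
    field_simp
    change v * m0 + w * m1 - w * m1 = v * m0
    ring
  -- observed conditional expectation given L = l
  have hYoq : cex p Yo (fun ω => L ω = l) * q = u * m0 + w * m1 := by
    have := key Yo
    rw [hconsCex a', hconsCex (!a')] at this
    exact this
  constructor
  · rw [hgsIff, hΨval, hconsCex a']
  · rw [hgsIff]
    constructor
    · intro h
      have h2 : cex p Yo (fun ω => L ω = l) * q ≥ ψ₁ (!a') l * q := by
        rw [hYoq, hψq]
        nlinarith
      exact le_of_mul_le_mul_right h2 hq
    · intro h
      have h2 : ψ₁ (!a') l * q ≤ cex p Yo (fun ω => L ω = l) * q :=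
        mul_le_mul_of_nonneg_right h (le_of_lt hq)
      rw [hYoq, hψq] at h2
      nlinarith
end

section
/- In a one-sided compliance instrumental variable setting where Z is randomized (Z ⫫ (Y¹, Y⁰, A^{z=0}, A^{z=1})), exclusion holds (Y^{a,z} = Yᵃ), consistency holds, and A^{z=0} = 0 a.s. (those assigned Z=0 cannot take treatment), the average treatment effect on the treated is point-identified: E[Y¹ − Y⁰ | A=1] = E[Y | Z=1, A=1] − (E[Y | Z=0] − E[Y·1{A=0} | Z=1]) / P(A=1 | Z=1), where A denotes the treatment received and all conditioning events have positive probability. -/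
open scoped Classical
open Finset

/-!
Let `S = A^{z=1}` mark the compliers. One-sided compliance and consistency give `A = Z ∧ S`
almost surely, so every quantity in the formula is an expectation of a function of
`(Y¹, Y⁰, S)` restricted to an event `{Z = z}`; randomization factors each of these as
an unconditional expectation times `P(Z = z)`, and the factors `P(Z = z)` cancel. This
identifies the treated with the compliers, `E[Y | Z=1, A=1] = E[Y¹ | S]`,
`E[Y | Z=0] = E[Y⁰]` and `E[Y 1{A=0} | Z=1] = E[Y⁰ 1{¬S}]`, so the correction term is
`E[Y⁰ 1{S}] / P(S) = E[Y⁰ | S]`.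
-/

section DiscreteExpectation

variable {Ω : Type*} [Fintype Ω] {p : Ω → ℝ}

theorem ex_congr_of_pos (hp : ∀ ω, 0 ≤ p ω) {f g : Ω → ℝ} (h : ∀ ω, 0 < p ω → f ω = g ω) :
    ex p f = ex p g := by
  refine sum_congr rfl fun ω _ => ?_
  rcases (hp ω).lt_or_eq with hω | hω
  · rw [h ω hω]
  · simp [← hω]

theorem ex_split_indicator (f : Ω → ℝ) (E : Ω → Prop) [DecidablePred E] :
    ex p f = ex p (fun ω => f ω * if E ω then 1 else 0) +
      ex p (fun ω => f ω * if ¬E ω then 1 else 0) := by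
  rw [ex, ex, ex, ← sum_add_distrib]
  refine sum_congr rfl fun ω _ => ?_
  by_cases hE : E ω <;> simp [hE]

theorem pr_eq_ex (E : Ω → Prop) [DecidablePred E] :
    pr p E = ex p (fun ω => if E ω then 1 else 0) := by
  refine sum_congr rfl fun ω _ => ?_
  by_cases hE : E ω <;> simp [hE]

theorem cex_eq_ex_div (f : Ω → ℝ) (E : Ω → Prop) [DecidablePred E] :
    cex p f E = ex p (fun ω => f ω * if E ω then 1 else 0) / pr p E := by
  rw [cex, ex]
  congr 1
  refine sum_congr rfl fun ω _ => ?_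
  by_cases hE : E ω <;> simp [hE]

theorem cex_sub (f g : Ω → ℝ) (E : Ω → Prop) :
    cex p (fun ω => f ω - g ω) E = cex p f E - cex p g E := by
  rw [cex, cex, cex, ← sub_div, ← sum_sub_distrib]
  congr 1
  refine sum_congr rfl fun ω _ => ?_
  split_ifs <;> ring

end DiscreteExpectation

theorem treatment_eq_instrument_and_complier {a z : Bool} {az : Bool → Bool}
    (h : a = az z) (h₀ : az false = false) : a = (z && az true) := by
  cases z <;> simp [h, h₀]

/-- `S` is the complier indicator `A^{z=1}`; `treatment_eq` combines consistency with one-sided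
compliance. -/
structure OneSidedIV {Ω : Type*} [Fintype Ω] (p : Ω → ℝ) (Y : Bool → Ω → ℝ) (Yo : Ω → ℝ)
    (A Z S : Ω → Bool) : Prop where
  nonneg : ∀ ω, 0 ≤ p ω
  treatment_eq : ∀ ω, 0 < p ω → A ω = (Z ω && S ω)
  outcome_eq : ∀ ω, 0 < p ω → Yo ω = Y (A ω) ω
  indep : ∀ (φ : ℝ → ℝ → Bool → ℝ) (z : Bool),
    ex p (fun ω => φ (Y true ω) (Y false ω) (S ω) * if Z ω = z then 1 else 0) =
      ex p (fun ω => φ (Y true ω) (Y false ω) (S ω)) * pr p (fun ω => Z ω = z)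

namespace OneSidedIV

variable {Ω : Type*} [Fintype Ω] {p : Ω → ℝ} {Y : Bool → Ω → ℝ} {Yo : Ω → ℝ} {A Z S : Ω → Bool}

theorem ex_eq_mul_pr (h : OneSidedIV p Y Yo A Z S) (φ : ℝ → ℝ → Bool → ℝ) (z : Bool)
    {f : Ω → ℝ}
    (hf : ∀ ω, 0 < p ω → f ω = φ (Y true ω) (Y false ω) (S ω) * if Z ω = z then 1 else 0) :
    ex p f = ex p (fun ω => φ (Y true ω) (Y false ω) (S ω)) * pr p (fun ω => Z ω = z) :=
  (ex_congr_of_pos h.nonneg hf).trans (h.indep φ z)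

theorem pr_treated (h : OneSidedIV p Y Yo A Z S) :
    pr p (fun ω => A ω = true) = pr p (fun ω => S ω = true) * pr p (fun ω => Z ω = true) := by
  rw [pr_eq_ex, pr_eq_ex (fun ω => S ω = true)]
  refine h.ex_eq_mul_pr (fun _ _ s => if s then 1 else 0) true fun ω hω => ?_
  rw [h.treatment_eq ω hω]
  cases Z ω <;> cases S ω <;> simp

theorem pr_instrument_and_treated (h : OneSidedIV p Y Yo A Z S) :
    pr p (fun ω => Z ω = true ∧ A ω = true) =
      pr p (fun ω => S ω = true) * pr p (fun ω => Z ω = true) := by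
  rw [pr_eq_ex, pr_eq_ex (fun ω => S ω = true)]
  refine h.ex_eq_mul_pr (fun _ _ s => if s then 1 else 0) true fun ω hω => ?_
  rw [h.treatment_eq ω hω]
  cases Z ω <;> cases S ω <;> simp

theorem cpr_treated (h : OneSidedIV p Y Yo A Z S) (hZ : pr p (fun ω => Z ω = true) ≠ 0) :
    cpr p (fun ω => A ω = true) (fun ω => Z ω = true) = pr p (fun ω => S ω = true) := by
  simp only [cpr, and_comm (a := A _ = true)]
  rw [h.pr_instrument_and_treated, mul_div_cancel_right₀ _ hZ]

theorem cex_effect_treated (h : OneSidedIV p Y Yo A Z S) (hZ : pr p (fun ω => Z ω = true) ≠ 0) :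
    cex p (fun ω => Y true ω - Y false ω) (fun ω => A ω = true) =
      cex p (fun ω => Y true ω - Y false ω) (fun ω => S ω = true) := by
  rw [cex_eq_ex_div, cex_eq_ex_div, h.pr_treated,
    h.ex_eq_mul_pr (fun y₁ y₀ s => (y₁ - y₀) * if s then 1 else 0) true fun ω hω => ?_,
    mul_div_mul_right _ _ hZ]
  rw [h.treatment_eq ω hω]
  cases Z ω <;> cases S ω <;> simp

theorem cex_outcome_instrument_and_treated (h : OneSidedIV p Y Yo A Z S)
    (hZ : pr p (fun ω => Z ω = true) ≠ 0) :
    cex p Yo (fun ω => Z ω = true ∧ A ω = true) = cex p (Y true) (fun ω => S ω = true) := by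
  rw [cex_eq_ex_div, cex_eq_ex_div, h.pr_instrument_and_treated,
    h.ex_eq_mul_pr (fun y₁ _ s => y₁ * if s then 1 else 0) true fun ω hω => ?_,
    mul_div_mul_right _ _ hZ]
  rw [h.outcome_eq ω hω, h.treatment_eq ω hω]
  cases Z ω <;> cases S ω <;> simp

theorem cex_outcome_control (h : OneSidedIV p Y Yo A Z S)
    (hZ : pr p (fun ω => Z ω = false) ≠ 0) :
    cex p Yo (fun ω => Z ω = false) = ex p (Y false) := by
  rw [cex_eq_ex_div, h.ex_eq_mul_pr (fun _ y₀ _ => y₀) false fun ω hω => ?_,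
    mul_div_cancel_right₀ _ hZ]
  rw [h.outcome_eq ω hω, h.treatment_eq ω hω]
  cases Z ω <;> simp

theorem cex_untreated_outcome_instrument (h : OneSidedIV p Y Yo A Z S)
    (hZ : pr p (fun ω => Z ω = true) ≠ 0) :
    cex p (fun ω => Yo ω * if A ω = false then 1 else 0) (fun ω => Z ω = true) =
      ex p (fun ω => Y false ω * if ¬S ω = true then 1 else 0) := by
  rw [cex_eq_ex_div, h.ex_eq_mul_pr (fun _ y₀ s => y₀ * if ¬s = true then 1 else 0) true
    fun ω hω => ?_, mul_div_cancel_right₀ _ hZ]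
  rw [h.outcome_eq ω hω, h.treatment_eq ω hω]
  cases Z ω <;> cases S ω <;> simp

end OneSidedIV

theorem stmt19_general
    {Ω : Type*} [Fintype Ω]
    (p : Ω → ℝ) (hp : ∀ ω, 0 ≤ p ω)
    (Y : Bool → Ω → ℝ) (Yo : Ω → ℝ) (A Z : Ω → Bool) (Az : Bool → Ω → Bool)
    -- received treatment is the compliance potential at the assigned instrument value
    (hAz : ∀ ω, 0 < p ω → A ω = Az (Z ω) ω)
    -- one-sided compliance: A^{z=0} = 0 a.s.
    (honesided : ∀ ω, 0 < p ω → Az false ω = false)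
    -- consistency (with exclusion built in: potential outcomes indexed by `a` only)
    (hcons : ∀ ω, 0 < p ω → Yo ω = Y (A ω) ω)
    -- randomization: (Y¹, Y⁰, A^{z=1}) jointly independent of Z
    (hrand : ∀ (φ : ℝ → ℝ → Bool → ℝ) (z : Bool),
      ex p (fun ω => φ (Y true ω) (Y false ω) (Az true ω) *
        (if Z ω = z then 1 else 0)) =
      ex p (fun ω => φ (Y true ω) (Y false ω) (Az true ω)) *
        pr p (fun ω => Z ω = z))
    -- positivity of the conditioning events
    (hZpos : ∀ z, pr p (fun ω => Z ω = z) > 0) :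
    cex p (fun ω => Y true ω - Y false ω) (fun ω => A ω = true) =
      cex p Yo (fun ω => Z ω = true ∧ A ω = true) -
      (cex p Yo (fun ω => Z ω = false) -
        cex p (fun ω => Yo ω * (if A ω = false then 1 else 0))
          (fun ω => Z ω = true)) /
      cpr p (fun ω => A ω = true) (fun ω => Z ω = true) := by
  have h : OneSidedIV p Y Yo A Z (Az true) :=
    ⟨hp, fun ω hω => treatment_eq_instrument_and_complier (az := (Az · ω)) (hAz ω hω)
      (honesided ω hω), hcons, hrand⟩
  have hZ₁ := (hZpos true).ne'
  rw [h.cex_effect_treated hZ₁, h.cex_outcome_instrument_and_treated hZ₁,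
    h.cex_outcome_control (hZpos false).ne', h.cex_untreated_outcome_instrument hZ₁,
    h.cpr_treated hZ₁, ex_split_indicator (Y false) (fun ω => Az true ω = true),
    add_sub_cancel_right, ← cex_eq_ex_div]
  exact cex_sub _ _ _

/-- Balke–Pearl one-sided-compliance IV setting: with a randomized instrument `Z`,
exclusion, consistency, and one-sided compliance `A^{z=0} = 0` a.s., the average
treatment effect on the treated is point-identified. -/
theorem stmt19
    {Ω : Type*} [Fintype Ω]
    (p : Ω → ℝ) (hp : ∀ ω, 0 ≤ p ω) (hsum : ∑ ω, p ω = 1)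
    (Y : Bool → Ω → ℝ) (Yo : Ω → ℝ) (A Z : Ω → Bool) (Az : Bool → Ω → Bool)
    -- received treatment is the compliance potential at the assigned instrument value
    (hAz : ∀ ω, 0 < p ω → A ω = Az (Z ω) ω)
    -- one-sided compliance: A^{z=0} = 0 a.s.
    (honesided : ∀ ω, 0 < p ω → Az false ω = false)
    -- consistency (with exclusion built in: potential outcomes indexed by `a` only)
    (hcons : ∀ ω, 0 < p ω → Yo ω = Y (A ω) ω)
    -- randomization: (Y¹, Y⁰, A^{z=1}) jointly independent of Z
    (hrand : ∀ (φ : ℝ → ℝ → Bool → ℝ) (z : Bool),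
      ex p (fun ω => φ (Y true ω) (Y false ω) (Az true ω) *
        (if Z ω = z then 1 else 0)) =
      ex p (fun ω => φ (Y true ω) (Y false ω) (Az true ω)) *
        pr p (fun ω => Z ω = z))
    -- positivity of the conditioning events
    (hZpos : ∀ z, pr p (fun ω => Z ω = z) > 0)
    (hApos : cpr p (fun ω => A ω = true) (fun ω => Z ω = true) > 0) :
    cex p (fun ω => Y true ω - Y false ω) (fun ω => A ω = true) =
      cex p Yo (fun ω => Z ω = true ∧ A ω = true) -
      (cex p Yo (fun ω => Z ω = false) -
        cex p (fun ω => Yo ω * (if A ω = false then 1 else 0))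
          (fun ω => Z ω = true)) /
      cpr p (fun ω => A ω = true) (fun ω => Z ω = true) :=
  stmt19_general p hp Y Yo A Z Az hAz honesided hcons hrand hZpos
end
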